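/- For all $\alpha,\beta,\beta_0>0$, the within-population tie probability of the HHDP exceeds the across-population tie probability: $\frac{\beta+\beta_0+1}{(\beta+1)(\beta_0+1)} > \frac{1}{\beta_0+1} + \frac{\beta_0}{(\alpha+1)(\beta+1)(\beta_0+1)}$. -/
import Mathlib

/-- The within-population tie probability of the HHDP strictly exceeds the
across-population tie probability, for all `α, β, β₀ > 0`. -/
theorem hhdp_within_gt_across (α β β0 : ℝ) (hα : 0 < α) (hβ : 0 < β) (hβ0 : 0 < β0) :
    (β + β0 + 1) / ((β + 1) * (β0 + 1)) >
      1 / (β0 + 1) + β0 / ((α + 1) * (β + 1) * (β0 + 1)) := by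
  rw [gt_iff_lt, div_add_div _ _ (by positivity) (by positivity), div_lt_div_iff₀ (by positivity) (by positivity)]
  ring_nf
  nlinarith [mul_pos hα hβ0, mul_pos (mul_pos hα hβ0) hβ, mul_pos hβ hβ0, mul_pos hβ0 (mul_pos hβ0 hβ), mul_pos hα (mul_pos hβ0 hβ0), sq_nonneg β0, mul_pos (mul_pos hα (mul_pos hβ0 hβ0)) hβ]
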